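/- Let n≥2, 1≤p<n, set p* := np/(n−p), and let q satisfy p<q<p*. Then there exists a positive constant C, depending only on n, p, q, such that for every u ∈ C_c^∞(ℝ^n) and every h ∈ ℝ^n, ‖u(h+·) − u‖_{L^q(ℝ^n)} ≤ C ‖∇u‖_{L^p(ℝ^n)} |h|^{n(1/q − 1/p*)}. In particular the exponent n(1/q − 1/p*) is strictly positive, so ‖u(h+·)−u‖_{L^q(ℝ^n)} → 0 as |h|→0. -/

import Mathlib

open MeasureTheory

noncomputable section

open scoped ENNReal NNReal

open scoped ENNReal NNReal

lemma my_interp {α : Type*} [MeasurableSpace α] {μ : Measure α} {w : α → ℝ}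
    (hw : AEMeasurable w μ) {p r q θ : ℝ} (hp : 0 < p) (hr : 0 < r) (hq : 0 < q)
    (hθ : 0 ≤ θ) (hθ1 : θ ≤ 1) (hpq : 1/q = θ/p + (1-θ)/r) :
    eLpNorm w (ENNReal.ofReal q) μ ≤
      (eLpNorm w (ENNReal.ofReal p) μ) ^ θ * (eLpNorm w (ENNReal.ofReal r) μ) ^ (1-θ) := by
  set W : α → ℝ≥0∞ := fun x => (‖w x‖₊ : ℝ≥0∞) with hW
  have hWm : AEMeasurable W μ := hw.nnnorm.coe_nnreal_ennreal
  have hq0 : q ≠ 0 := hq.ne'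
  have hp0 : p ≠ 0 := hp.ne'
  have hr0 : r ≠ 0 := hr.ne'
  have ha : 0 ≤ q * θ / p := div_nonneg (mul_nonneg hq.le hθ) hp.le
  have hb : 0 ≤ q * (1 - θ) / r := div_nonneg (mul_nonneg hq.le (by linarith)) hr.le
  have hab : q * θ / p + q * (1 - θ) / r = 1 := by
    have h1 : q * (1/q) = 1 := by field_simp
    calc q * θ / p + q * (1 - θ) / r = q * (θ/p + (1-θ)/r) := by ring
      _ = q * (1/q) := by rw [← hpq]
      _ = 1 := h1
  have key : ∫⁻ x, W x ^ q ∂μ ≤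
      (∫⁻ x, W x ^ p ∂μ) ^ (q * θ / p) * (∫⁻ x, W x ^ r ∂μ) ^ (q * (1 - θ) / r) := by
    have h := ENNReal.lintegral_mul_norm_pow_le (hW ▸ hWm.pow_const p) (hW ▸ hWm.pow_const r)
      ha hb hab (μ := μ)
    calc ∫⁻ x, W x ^ q ∂μ
        = ∫⁻ x, (W x ^ p) ^ (q * θ / p) * (W x ^ r) ^ (q * (1 - θ) / r) ∂μ := by
          congr 1; ext x
          rw [← ENNReal.rpow_mul, ← ENNReal.rpow_mul,
            ← ENNReal.rpow_add_of_nonneg _ _ (by positivity) (by positivity)]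
          congr 1
          field_simp
          ring
      _ ≤ _ := h
  have hmono := ENNReal.rpow_le_rpow key (by positivity : (0:ℝ) ≤ 1/q)
  rw [ENNReal.mul_rpow_of_nonneg _ _ (by positivity), ← ENNReal.rpow_mul, ← ENNReal.rpow_mul]
    at hmono
  have e1 : q * θ / p * (1 / q) = 1/p * θ := by field_simp
  have e2 : q * (1 - θ) / r * (1 / q) = 1/r * (1-θ) := by field_simp
  rw [e1, e2, ENNReal.rpow_mul, ENNReal.rpow_mul] at hmono
  rw [eLpNorm_eq_lintegral_rpow_enorm_toReal (by simpa using hq) (by simp),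
    eLpNorm_eq_lintegral_rpow_enorm_toReal (by simpa using hp) (by simp),
    eLpNorm_eq_lintegral_rpow_enorm_toReal (by simpa using hr) (by simp),
    ENNReal.toReal_ofReal hq.le, ENNReal.toReal_ofReal hp.le, ENNReal.toReal_ofReal hr.le]
  exact hmono

open scoped ENNReal NNReal

lemma my_translate {n : ℕ} {u : EuclideanSpace ℝ (Fin n) → ℝ}
    (hu : ContDiff ℝ (⊤ : ℕ∞) u) (h2u : HasCompactSupport u) {p : ℝ} (hp : 1 ≤ p)
    (h : EuclideanSpace ℝ (Fin n)) :
    eLpNorm (fun x => u (h + x) - u x) (ENNReal.ofReal p) volume ≤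
      ENNReal.ofReal ‖h‖ *
        eLpNorm (fun y => ‖fderiv ℝ u y‖) (ENNReal.ofReal p) volume := by
  have hp0 : (0:ℝ) < p := lt_of_lt_of_le one_pos hp
  have hgc : Continuous fun y : EuclideanSpace ℝ (Fin n) => ‖fderiv ℝ u y‖ := (hu.continuous_fderiv (by simp)).norm
  set g : EuclideanSpace ℝ (Fin n) → ℝ := fun y => ‖fderiv ℝ u y‖ with hg
  have hucont : Continuous u := hu.continuous
  have hwcont : Continuous fun x : EuclideanSpace ℝ (Fin n) => u (h + x) - u x :=
    (hucont.comp (continuous_const.add continuous_id)).sub hucont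
  set ν : Measure ℝ := volume.restrict (Set.Ioc (0:ℝ) 1) with hν
  haveI : IsProbabilityMeasure ν := ⟨by simp [hν]⟩
  -- pointwise estimate
  have pointwise : ∀ x : EuclideanSpace ℝ (Fin n), (‖u (h + x) - u x‖₊ : ℝ≥0∞) ^ p ≤
      (ENNReal.ofReal ‖h‖) ^ p * ∫⁻ t, (‖g (x + t • h)‖₊ : ℝ≥0∞) ^ p ∂ν := by
    intro x
    -- FTC
    have hderiv : ∀ t ∈ Set.uIcc (0:ℝ) 1,
        HasDerivAt (fun t : ℝ => u (x + t • h)) ((fderiv ℝ u (x + t • h)) h) t := by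
      intro t _
      have h1 : HasFDerivAt u (fderiv ℝ u (x + t • h)) (x + t • h) :=
        (hu.differentiable (by simp) (x + t • h)).hasFDerivAt
      have h2 : HasDerivAt (fun t : ℝ => x + t • h) h t := by
        simpa using ((hasDerivAt_id t).smul_const h).const_add x
      exact h1.comp_hasDerivAt t h2
    have hc1 : Continuous fun t : ℝ => x + t • h :=
      continuous_const.add (continuous_id.smul continuous_const)
    have hcontD : Continuous fun t : ℝ => (fderiv ℝ u (x + t • h)) h :=
      (((hu.continuous_fderiv (by simp)).comp hc1).clm_apply continuous_const)
    have ftc : ∫ t in (0:ℝ)..1, (fderiv ℝ u (x + t • h)) h =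
        u (h + x) - u x := by
      rw [intervalIntegral.integral_eq_sub_of_hasDerivAt hderiv
        (hcontD.intervalIntegrable 0 1)]
      simp [add_comm]
    have hb : ‖u (h + x) - u x‖ ≤ ∫ t in (0:ℝ)..1, ‖h‖ * g (x + t • h) := by
      rw [← ftc]
      calc ‖∫ t in (0:ℝ)..1, (fderiv ℝ u (x + t • h)) h‖
          ≤ ∫ t in (0:ℝ)..1, ‖(fderiv ℝ u (x + t • h)) h‖ :=
            intervalIntegral.norm_integral_le_integral_norm zero_le_one
        _ ≤ ∫ t in (0:ℝ)..1, ‖h‖ * g (x + t • h) := by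
            apply intervalIntegral.integral_mono_on zero_le_one
              (hcontD.norm.intervalIntegrable 0 1)
              ((continuous_const.mul (hgc.comp
                (continuous_const.add (continuous_id.smul continuous_const)))).intervalIntegrable 0 1)
            intro t _
            calc ‖(fderiv ℝ u (x + t • h)) h‖ ≤ ‖fderiv ℝ u (x + t • h)‖ * ‖h‖ :=
                  (fderiv ℝ u (x + t • h)).le_opNorm h
              _ = ‖h‖ * g (x + t • h) := by rw [mul_comm]
    -- to lintegral
    have hFc : Continuous fun t : ℝ => g (x + t • h) :=
      hgc.comp (continuous_const.add (continuous_id.smul continuous_const))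
    have step1 : (‖u (h + x) - u x‖₊ : ℝ≥0∞) ≤
        ENNReal.ofReal ‖h‖ * ∫⁻ t, (‖g (x + t • h)‖₊ : ℝ≥0∞) ∂ν := by
      have e0 : (‖u (h + x) - u x‖₊ : ℝ≥0∞) = ENNReal.ofReal ‖u (h + x) - u x‖ :=
        (ofReal_norm _).symm
      rw [e0]
      refine le_trans (ENNReal.ofReal_le_ofReal hb) ?_
      rw [intervalIntegral.integral_of_le zero_le_one]
      rw [ofReal_integral_eq_lintegral_ofReal (f := fun t => ‖h‖ * g (x + t • h))
        ((continuous_const.mul hFc).integrableOn_Ioc)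
        (Filter.Eventually.of_forall fun t => mul_nonneg (norm_nonneg _) (norm_nonneg _))]
      rw [← lintegral_const_mul' _ _ ENNReal.ofReal_ne_top]
      refine lintegral_mono fun t => ?_
      rw [ENNReal.ofReal_mul (norm_nonneg h)]
      exact mul_le_mul_right ((ENNReal.ofReal_le_ofReal (le_abs_self _)).trans_eq
        (by rw [← Real.norm_eq_abs]; exact ofReal_norm _)) _
    -- Jensen via probability measure
    have jensen : (∫⁻ t, (‖g (x + t • h)‖₊ : ℝ≥0∞) ∂ν) ≤
        (∫⁻ t, (‖g (x + t • h)‖₊ : ℝ≥0∞) ^ p ∂ν) ^ (1/p) := by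
      have := eLpNorm'_le_eLpNorm'_of_exponent_le (f := fun t => g (x + t • h))
        one_pos hp ν hFc.aestronglyMeasurable
      simpa [eLpNorm', enorm_eq_nnnorm] using this
    calc (‖u (h + x) - u x‖₊ : ℝ≥0∞) ^ p
        ≤ (ENNReal.ofReal ‖h‖ * (∫⁻ t, (‖g (x + t • h)‖₊ : ℝ≥0∞) ^ p ∂ν) ^ (1/p)) ^ p := by
          gcongr
          exact le_trans step1 (by gcongr)
      _ = (ENNReal.ofReal ‖h‖) ^ p * ∫⁻ t, (‖g (x + t • h)‖₊ : ℝ≥0∞) ^ p ∂ν := by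
          rw [ENNReal.mul_rpow_of_nonneg _ _ hp0.le, ← ENNReal.rpow_mul,
            one_div_mul_cancel hp0.ne', ENNReal.rpow_one]
  -- integrate the pointwise estimate
  have swap : ∫⁻ x, ∫⁻ t, (‖g (x + t • h)‖₊ : ℝ≥0∞) ^ p ∂ν ∂(volume : Measure (EuclideanSpace ℝ (Fin n))) =
      ∫⁻ y, (‖g y‖₊ : ℝ≥0∞) ^ p ∂(volume : Measure (EuclideanSpace ℝ (Fin n))) := by
    rw [lintegral_lintegral_swap]
    · have inner : ∀ t : ℝ, ∫⁻ x, (‖g (x + t • h)‖₊ : ℝ≥0∞) ^ p ∂(volume : Measure (EuclideanSpace ℝ (Fin n))) =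
          ∫⁻ y, (‖g y‖₊ : ℝ≥0∞) ^ p ∂(volume : Measure (EuclideanSpace ℝ (Fin n))) := fun t =>
        lintegral_add_right_eq_self (fun y => (‖g y‖₊ : ℝ≥0∞) ^ p) (t • h)
      simp_rw [inner]
      simp
    · apply Measurable.aemeasurable
      have hc : Continuous fun z : EuclideanSpace ℝ (Fin n) × ℝ => g (z.1 + z.2 • h) :=
        hgc.comp (continuous_fst.add (continuous_snd.smul continuous_const))
      exact (hc.measurable.nnnorm.coe_nnreal_ennreal).pow_const p
  have final : ∫⁻ x, (‖u (h + x) - u x‖₊ : ℝ≥0∞) ^ p ∂(volume : Measure (EuclideanSpace ℝ (Fin n))) ≤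
      (ENNReal.ofReal ‖h‖) ^ p * ∫⁻ y, (‖g y‖₊ : ℝ≥0∞) ^ p ∂(volume : Measure (EuclideanSpace ℝ (Fin n))) := by
    calc ∫⁻ x, (‖u (h + x) - u x‖₊ : ℝ≥0∞) ^ p ∂(volume : Measure (EuclideanSpace ℝ (Fin n)))
        ≤ ∫⁻ x, (ENNReal.ofReal ‖h‖) ^ p * ∫⁻ t, (‖g (x + t • h)‖₊ : ℝ≥0∞) ^ p ∂ν
            ∂(volume : Measure (EuclideanSpace ℝ (Fin n))) := lintegral_mono pointwise
      _ = (ENNReal.ofReal ‖h‖) ^ p *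
            ∫⁻ x, ∫⁻ t, (‖g (x + t • h)‖₊ : ℝ≥0∞) ^ p ∂ν ∂(volume : Measure (EuclideanSpace ℝ (Fin n))) :=
          lintegral_const_mul' _ _ (by simp [ENNReal.rpow_lt_top_of_nonneg hp0.le ENNReal.ofReal_ne_top |>.ne, hp0.le])
      _ = _ := by rw [swap]
  rw [eLpNorm_eq_lintegral_rpow_enorm_toReal (by simpa using hp0) (by simp),
    eLpNorm_eq_lintegral_rpow_enorm_toReal (by simpa using hp0) (by simp),
    ENNReal.toReal_ofReal hp0.le]
  calc (∫⁻ x, (‖u (h + x) - u x‖₊ : ℝ≥0∞) ^ p ∂(volume : Measure (EuclideanSpace ℝ (Fin n)))) ^ (1/p)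
      ≤ ((ENNReal.ofReal ‖h‖) ^ p * ∫⁻ y, (‖g y‖₊ : ℝ≥0∞) ^ p ∂(volume : Measure (EuclideanSpace ℝ (Fin n)))) ^ (1/p) := by
        gcongr
    _ = ENNReal.ofReal ‖h‖ * (∫⁻ y, (‖g y‖₊ : ℝ≥0∞) ^ p ∂(volume : Measure (EuclideanSpace ℝ (Fin n)))) ^ (1/p) := by
        rw [ENNReal.mul_rpow_of_nonneg _ _ (by positivity), ← ENNReal.rpow_mul,
          mul_one_div_cancel hp0.ne', ENNReal.rpow_one]

/-- integral uniform continuity estimate giving the compactness of the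
Sobolev embedding, for `p ≤ q < p* = np/(n−p)`. -/
theorem stmt8 (n : ℕ) (hn : 2 ≤ n) (p pstar q : ℝ)
    (hp1 : 1 ≤ p) (hp2 : p < n) (hps : pstar = n * p / (n - p))
    (hq1 : p < q) (hq2 : q < pstar) :
    0 < (n : ℝ) * (1 / q - 1 / pstar) ∧
    ∃ C : ℝ, 0 < C ∧ ∀ u : EuclideanSpace ℝ (Fin n) → ℝ,
      ContDiff ℝ (⊤ : ℕ∞) u → HasCompactSupport u →
      ∀ h : EuclideanSpace ℝ (Fin n),
        eLpNorm (fun x => u (h + x) - u x) (ENNReal.ofReal q) volume ≤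
          ENNReal.ofReal (C * ‖h‖ ^ ((n : ℝ) * (1 / q - 1 / pstar))) *
            eLpNorm (fun y => ‖fderiv ℝ u y‖) (ENNReal.ofReal p) volume := by
  have hp0 : (0:ℝ) < p := lt_of_lt_of_le one_pos hp1
  have hnp : (0:ℝ) < (n:ℝ) - p := by linarith
  have hn0 : (0:ℝ) < (n:ℝ) := by positivity
  have hps0 : (0:ℝ) < pstar := by rw [hps]; positivity
  have hq0 : (0:ℝ) < q := lt_trans hp0 hq1
  have h1n : 1/pstar = 1/p - 1/(n:ℝ) := by
    rw [hps, one_div_div, div_sub_div _ _ hp0.ne' hn0.ne']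
    congr 1 <;> ring
  set θ : ℝ := (n : ℝ) * (1 / q - 1 / pstar) with hθdef
  have hiq : 1/q < 1/p := one_div_lt_one_div_of_lt hp0 hq1
  have his : 1/pstar < 1/q := one_div_lt_one_div_of_lt hq0 hq2
  have hθpos : 0 < θ := by
    apply mul_pos hn0; linarith
  have hθlt : θ < 1 := by
    have h2 : 1/q - 1/pstar < 1/(n:ℝ) := by
      have := h1n; linarith
    calc θ < (n:ℝ) * (1/(n:ℝ)) := mul_lt_mul_of_pos_left h2 hn0
      _ = 1 := by field_simp
  refine ⟨hθpos, ?_⟩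
  set CS : ℝ≥0 := SNormLESNormFDerivOfEqConst ℝ
      (volume : Measure (EuclideanSpace ℝ (Fin n))) (p.toNNReal : ℝ) with hCS
  set Cr : ℝ := (2 * ((CS:ℝ) + 1)) ^ (1 - θ) with hCr
  have hCrpos : 0 < Cr := by rw [hCr]; positivity
  refine ⟨Cr, hCrpos, ?_⟩
  intro u hu h2u h
  set w : EuclideanSpace ℝ (Fin n) → ℝ := fun x => u (h + x) - u x with hw
  have hucont : Continuous u := hu.continuous
  have hwcont : Continuous w := (hucont.comp (continuous_const.add continuous_id)).sub hucont
  set G := eLpNorm (fun y => ‖fderiv ℝ u y‖) (ENNReal.ofReal p) volume with hG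
  have hGfd : G = eLpNorm (fderiv ℝ u) (ENNReal.ofReal p) volume := by
    rw [hG]; exact eLpNorm_norm _
  -- interpolation exponent relation
  have hpq : 1/q = θ/p + (1-θ)/pstar := by
    have h1p : 1/p = 1/pstar + 1/(n:ℝ) := by linarith
    have hθn : θ/(n:ℝ) = 1/q - 1/pstar := by
      rw [hθdef]; field_simp
    calc 1/q = 1/pstar + (1/q - 1/pstar) := by ring
      _ = 1/pstar + θ/(n:ℝ) := by rw [hθn]
      _ = θ*(1/pstar + 1/(n:ℝ)) + (1-θ)*(1/pstar) := by ring
      _ = θ*(1/p) + (1-θ)*(1/pstar) := by rw [← h1p]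
      _ = θ/p + (1-θ)/pstar := by ring
  have interp := my_interp (μ := (volume : Measure (EuclideanSpace ℝ (Fin n))))
    hwcont.measurable.aemeasurable hp0 hps0 hq0 hθpos.le hθlt.le hpq
  have step_p : eLpNorm w (ENNReal.ofReal p) volume ≤ ENNReal.ofReal ‖h‖ * G :=
    my_translate hu h2u hp1 h
  -- Sobolev inequality
  have hfinrank : Module.finrank ℝ (EuclideanSpace ℝ (Fin n)) = n := finrank_euclideanSpace_fin
  have hsobolev : eLpNorm u (ENNReal.ofReal pstar) volume ≤
      (CS : ℝ≥0∞) * eLpNorm (fderiv ℝ u) (ENNReal.ofReal p) volume := by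
    have hp' : ((pstar.toNNReal : ℝ))⁻¹ =
        ((p.toNNReal : ℝ))⁻¹ - ((Module.finrank ℝ (EuclideanSpace ℝ (Fin n)) : ℝ))⁻¹ := by
      rw [Real.coe_toNNReal _ hps0.le, Real.coe_toNNReal _ hp0.le, hfinrank,
        ← one_div, ← one_div, ← one_div]
      exact h1n
    have hpnn : (1 : ℝ≥0) ≤ p.toNNReal := by
      rw [← Real.toNNReal_one]
      exact Real.toNNReal_mono hp1
    have hdim : 0 < Module.finrank ℝ (EuclideanSpace ℝ (Fin n)) := by
      rw [hfinrank]; omega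
    have := eLpNorm_le_eLpNorm_fderiv_of_eq
      (μ := (volume : Measure (EuclideanSpace ℝ (Fin n))))
      (hu.of_le (by simp)) h2u hpnn hdim hp'
    have e1 : ((pstar.toNNReal : ℝ≥0∞)) = ENNReal.ofReal pstar := rfl
    have e2 : ((p.toNNReal : ℝ≥0∞)) = ENNReal.ofReal p := rfl
    rw [e1, e2] at this
    exact this
  -- translation + triangle bound for the pstar norm
  have step_s : eLpNorm w (ENNReal.ofReal pstar) volume ≤ 2 * ((CS : ℝ≥0∞) + 1) * G := by
    have hinv : MeasurePreserving (fun x : EuclideanSpace ℝ (Fin n) => h + x)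
        volume volume := measurePreserving_add_left volume h
    have h2 : eLpNorm (fun x => u (h + x)) (ENNReal.ofReal pstar) volume =
        eLpNorm u (ENNReal.ofReal pstar) volume :=
      eLpNorm_comp_measurePreserving hucont.aestronglyMeasurable hinv
    have h1 : eLpNorm w (ENNReal.ofReal pstar) volume ≤
        eLpNorm (fun x => u (h + x)) (ENNReal.ofReal pstar) volume +
          eLpNorm u (ENNReal.ofReal pstar) volume := by
      apply eLpNorm_sub_le
        ((hucont.comp (continuous_const.add continuous_id)).aestronglyMeasurable)
        hucont.aestronglyMeasurable
      rw [ENNReal.one_le_ofReal]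
      linarith
    calc eLpNorm w (ENNReal.ofReal pstar) volume
        ≤ eLpNorm (fun x => u (h + x)) (ENNReal.ofReal pstar) volume +
            eLpNorm u (ENNReal.ofReal pstar) volume := h1
      _ = 2 * eLpNorm u (ENNReal.ofReal pstar) volume := by rw [h2, two_mul]
      _ ≤ 2 * ((CS : ℝ≥0∞) * eLpNorm (fderiv ℝ u) (ENNReal.ofReal p) volume) := by
          gcongr
      _ ≤ 2 * ((CS : ℝ≥0∞) + 1) * G := by
          rw [hGfd, mul_assoc]
          gcongr
          exact le_self_add
  -- assemble
  have hGsplit : G ^ θ * G ^ (1-θ) = G := by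
    rw [← ENNReal.rpow_add_of_nonneg _ _ hθpos.le (by linarith)]
    simp
  have hconst : ((2 : ℝ≥0∞) * ((CS : ℝ≥0∞) + 1)) ^ (1-θ) = ENNReal.ofReal Cr := by
    have e3 : ((2 : ℝ≥0∞) * ((CS : ℝ≥0∞) + 1)) = ENNReal.ofReal (2 * ((CS:ℝ) + 1)) := by
      rw [ENNReal.ofReal_mul (by norm_num), ENNReal.ofReal_add CS.coe_nonneg zero_le_one]
      simp
    rw [e3, ENNReal.ofReal_rpow_of_nonneg (by positivity) (by linarith), hCr]
  calc eLpNorm w (ENNReal.ofReal q) volume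
      ≤ (eLpNorm w (ENNReal.ofReal p) volume) ^ θ *
          (eLpNorm w (ENNReal.ofReal pstar) volume) ^ (1-θ) := interp
    _ ≤ (ENNReal.ofReal ‖h‖ * G) ^ θ * (2 * ((CS : ℝ≥0∞) + 1) * G) ^ (1-θ) := by
        gcongr <;> linarith
    _ = (ENNReal.ofReal ‖h‖) ^ θ * ENNReal.ofReal Cr * (G ^ θ * G ^ (1-θ)) := by
        rw [ENNReal.mul_rpow_of_nonneg _ _ hθpos.le,
          ENNReal.mul_rpow_of_nonneg _ _ (by linarith : (0:ℝ) ≤ 1-θ), hconst]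
        ring
    _ = ENNReal.ofReal (Cr * ‖h‖ ^ θ) * G := by
        rw [hGsplit, ENNReal.ofReal_mul hCrpos.le,
          ← ENNReal.ofReal_rpow_of_nonneg (norm_nonneg h) hθpos.le]
        ring
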